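/- For u ∈ W^J and w ∈ W with parabolic factorization w = w^J · w_J (w^J ∈ W^J, w_J ∈ W_J), if u is not less than or equal to w^J in Bruhat order then (T_{u^{-1}} C_w)|_J = 0. -/

import Mathlib

open LaurentPolynomial

noncomputable section
attribute [local instance] Classical.propDecidable

namespace HeckeRes

variable {B : Type} {W : Type} [Group W] {M : CoxeterMatrix B}

/-- The Laurent polynomial ring ℤ[q^{±1}]. -/
abbrev R : Type := LaurentPolynomial ℤ

/-- The variable q. -/
abbrev q : R := LaurentPolynomial.T 1

/-- The inverse variable q⁻¹. -/
abbrev qinv : R := LaurentPolynomial.T (-1)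

/-- Bruhat order: u ≤ w iff some reduced word for w has a subword with product u. -/
def bruhatLE (cs : CoxeterSystem M W) (u w : W) : Prop :=
  ∃ l : List B, cs.IsReduced l ∧ cs.wordProd l = w ∧
    ∃ l' : List B, l'.Sublist l ∧ cs.wordProd l' = u

def bruhatLT (cs : CoxeterSystem M W) (u w : W) : Prop :=
  bruhatLE cs u w ∧ u ≠ w

/-- The standard parabolic subgroup W_J. -/
def WJ (cs : CoxeterSystem M W) (J : Set B) : Subgroup W :=
  Subgroup.closure (cs.simple '' J)

/-- Minimal length representatives of left cosets W/W_J: no right descents in J. -/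
def IsMinRep (cs : CoxeterSystem M W) (J : Set B) (u : W) : Prop :=
  ∀ i ∈ J, cs.length (u * cs.simple i) = cs.length u + 1

/-- Minimal length representatives of right cosets W_J\W: no left descents in J. -/
def IsMinRepR (cs : CoxeterSystem M W) (J : Set B) (u : W) : Prop :=
  ∀ i ∈ J, cs.length (cs.simple i * u) = cs.length u + 1

variable {H : Type} [Ring H] [Algebra R H]

/-- Axioms making a basis of H indexed by W into the standard basis of the Hecke
algebra of (W,S), with quadratic relation T_s² = 1 + (q⁻¹ - q) T_s. -/
structure IsHeckeBasis (cs : CoxeterSystem M W) (Tb : Module.Basis W R H) : Prop where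
  T_one : Tb 1 = 1
  T_mul : ∀ u v : W, cs.length (u * v) = cs.length u + cs.length v →
    Tb u * Tb v = Tb (u * v)
  simple_mul : ∀ (i : B) (w : W), cs.length (cs.simple i * w) < cs.length w →
    Tb (cs.simple i) * Tb w = Tb (cs.simple i * w) + (qinv - q) • Tb w
  mul_simple : ∀ (w : W) (i : B), cs.length (w * cs.simple i) < cs.length w →
    Tb w * Tb (cs.simple i) = Tb (w * cs.simple i) + (qinv - q) • Tb w

/-- The restriction map |_J : H → H, T_w ↦ T_w if w ∈ W_J and 0 otherwise. -/
def resMap (cs : CoxeterSystem M W) (Tb : Module.Basis W R H) (J : Set B) : H →ₗ[R] H :=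
  Tb.constr R (fun w => if w ∈ WJ cs J then Tb w else 0)

/-- The parabolic subalgebra H_J, as the span of {T_w : w ∈ W_J}. -/
def HJ (cs : CoxeterSystem M W) (Tb : Module.Basis W R H) (J : Set B) : Submodule R H :=
  Submodule.span R (Tb '' (WJ cs J : Set W))

/-- A Laurent polynomial lies in ℤ[q]. -/
def IsPoly (p : R) : Prop := ∃ f : Polynomial ℤ, p = f.toLaurent

/-- Axioms for the Kazhdan–Lusztig basis: C_w = Σ_{x ≤ w} h_{x,w}(q) T_x with
h_{w,w} = 1 and h_{x,w} ∈ qℤ[q] for x ≠ w. -/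
structure IsKLBasis (cs : CoxeterSystem M W) (Tb : Module.Basis W R H) (C : W → H) : Prop where
  repr_self : ∀ w : W, Tb.repr (C w) w = 1
  repr_eq_zero : ∀ x w : W, ¬ bruhatLE cs x w → Tb.repr (C w) x = 0
  repr_mem : ∀ x w : W, x ≠ w → ∃ f : Polynomial ℤ,
    Tb.repr (C w) x = q * f.toLaurent

/-- The KL polynomial h_{y,x}. -/
def klPoly (Tb : Module.Basis W R H) (C : W → H) (y x : W) : R := Tb.repr (C x) y

/-- μ(y,x): the coefficient of q in h_{y,x}. -/
def klMu (Tb : Module.Basis W R H) (C : W → H) (y x : W) : ℤ :=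
  (klPoly Tb C y x).coeff 1

/-!
Expanding `C w` in the standard basis, only `T x` with `x ≤ w` occur. For a reduced word of `x`,
`T u⁻¹ * T x` is a combination of the `T (u⁻¹ * y)` with `y` a subword, so `y ≤ x ≤ w`. Such a
term survives restriction to `H_J` only if `y ∈ u W_J`; as `u` is the minimal representative of
that coset and parabolic projection is monotone for the Bruhat order, this would force `u ≤ w^J`.

Monotonicity of the projection rests on the subword property (a subword of one reduced word of `w`
is a subword of every word for `w`), which follows from the strong exchange condition; the latter
comes from Tits' sign representation of `W`.
-/

open CoxeterSystem
open scoped List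

variable (cs : CoxeterSystem M W)

local prefix:100 "s" => cs.simple
local prefix:100 "π" => cs.wordProd
local prefix:100 "ℓ" => cs.length

/-- Tits' sign representation, realised on all of `W × ℤˣ` rather than on reflections × `{±1}`. -/
def titsFun (i : B) (p : W × ℤˣ) : W × ℤˣ :=
  (s i * p.1 * s i, if p.1 = s i then -p.2 else p.2)

theorem titsFun_involutive (i : B) : Function.Involutive (titsFun cs i) := by
  rintro ⟨w, ε⟩
  by_cases hw : w = s i <;> simp [titsFun, hw, mul_assoc, mul_eq_one_iff_eq_inv]

def titsPerm (i : B) : Equiv.Perm (W × ℤˣ) :=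
  (titsFun_involutive cs i).toPerm

@[simp] theorem titsPerm_apply (i : B) (p : W × ℤˣ) :
    titsPerm cs i p = (s i * p.1 * s i, if p.1 = s i then -p.2 else p.2) := rfl

section

variable (i i' : B)

theorem simple_mul_pow_simple_mul_simple (k : ℕ) :
    s i' * (s i * s i') ^ k = (s i * s i')⁻¹ ^ k * s i' := by
  have h : MulAut.conj (s i') (s i * s i') = (s i * s i')⁻¹ := by
    simp [mul_assoc, cs.inv_simple]
  have := map_pow (MulAut.conj (s i')) (s i * s i') k
  rw [h, MulAut.conj_apply, cs.inv_simple] at this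
  rw [← this, cs.simple_mul_simple_cancel_right]

theorem titsPerm_mul_apply (w : W) (ε : ℤˣ) :
    (titsPerm cs i * titsPerm cs i') (w, ε) =
      (s i * s i' * w * (s i * s i')⁻¹,
        ε * ((if w = s i' then -1 else 1) * if w = (s i * s i')⁻¹ * s i' then -1 else 1)) := by
  have hcond : s i' * w * s i' = s i ↔ w = (s i * s i')⁻¹ * s i' := by
    rw [mul_inv_rev, cs.inv_simple, cs.inv_simple, ← mul_inv_eq_iff_eq_mul, cs.inv_simple,
      ← inv_mul_eq_iff_eq_mul, cs.inv_simple, mul_assoc]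
  rw [Equiv.Perm.mul_apply, titsPerm_apply, titsPerm_apply]
  dsimp only
  rw [hcond]
  refine Prod.ext ?_ ?_
  · simp [mul_assoc, cs.inv_simple]
  · split_ifs <;> simp

theorem titsPerm_mul_pow_apply (k : ℕ) (w : W) (ε : ℤˣ) :
    ((titsPerm cs i * titsPerm cs i') ^ k) (w, ε) =
      ((s i * s i') ^ k * w * ((s i * s i') ^ k)⁻¹,
        ε * ∏ n ∈ Finset.range (2 * k), if w = (s i * s i')⁻¹ ^ n * s i' then -1 else 1) := by
  induction k with
  | zero => simp
  | succ k ih =>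
    rw [pow_succ', Equiv.Perm.mul_apply, ih, titsPerm_mul_apply]
    set p := s i * s i'
    have hcond (n : ℕ) : p ^ k * w * (p ^ k)⁻¹ = p⁻¹ ^ n * s i' ↔
        w = p⁻¹ ^ (n + 2 * k) * s i' := by
      have hsp : s i' * p ^ k = p⁻¹ ^ k * s i' := simple_mul_pow_simple_mul_simple cs i i' k
      have hconj : p⁻¹ ^ (n + 2 * k) * s i' = (p ^ k)⁻¹ * (p⁻¹ ^ n * s i') * p ^ k := by
        rw [mul_assoc, mul_assoc, hsp, ← inv_pow]
        group
      rw [hconj]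
      constructor <;> intro h
      · rw [← h]; group
      · rw [h]; group
    have h0 := hcond 0
    have h1 := hcond 1
    rw [pow_zero, one_mul, zero_add] at h0
    rw [pow_one, add_comm] at h1
    refine Prod.ext (by group) ?_
    dsimp only
    rw [h0, h1, mul_add, mul_one, Finset.prod_range_succ, Finset.prod_range_succ, mul_assoc,
      mul_assoc]

end

theorem isLiftable_titsPerm : M.IsLiftable (titsPerm cs) := by
  intro i i'
  ext1 ⟨w, ε⟩
  -- `n ↦ (s i * s i')⁻¹ ^ n * s i'` has period `M i i'`, so every sign is flipped twice.
  have hp : (s i * s i')⁻¹ ^ M i i' = 1 := by rw [inv_pow, cs.simple_mul_simple_pow, inv_one]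
  rw [titsPerm_mul_pow_apply, cs.simple_mul_simple_pow, two_mul, Finset.prod_range_add]
  simp only [pow_add, hp, one_mul, Int.units_mul_self, mul_one, inv_one, Equiv.Perm.one_apply]

def titsHom : W →* Equiv.Perm (W × ℤˣ) := cs.lift ⟨titsPerm cs, isLiftable_titsPerm cs⟩

@[simp] theorem titsHom_simple (i : B) : titsHom cs (s i) = titsPerm cs i :=
  cs.lift_apply_simple (isLiftable_titsPerm cs) i

def titsSign (g w : W) : ℤˣ := (titsHom cs g (w, 1)).2

theorem titsHom_apply (g w : W) (ε : ℤˣ) :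
    titsHom cs g (w, ε) = (g * w * g⁻¹, ε * titsSign cs g w) := by
  induction g using cs.simple_induction_left generalizing w ε with
  | one => simp [titsSign]
  | mul_simple_left g i ih =>
    rw [titsSign, map_mul, Equiv.Perm.mul_apply, Equiv.Perm.mul_apply, ih w ε, ih w 1,
      titsHom_simple, titsPerm_apply, titsPerm_apply]
    simp only [mul_inv_rev, cs.inv_simple, mul_assoc, one_mul]
    split_ifs <;> simp

theorem titsSign_one (w : W) : titsSign cs 1 w = 1 := by simp [titsSign]

theorem titsSign_simple (i : B) (w : W) :
    titsSign cs (s i) w = if w = s i then -1 else 1 := by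
  simp [titsSign]

theorem titsSign_mul (g h w : W) :
    titsSign cs (g * h) w = titsSign cs h w * titsSign cs g (h * w * h⁻¹) := by
  rw [titsSign, map_mul, Equiv.Perm.mul_apply, titsHom_apply, titsHom_apply, one_mul]

theorem titsSign_reflection_self {t : W} (ht : cs.IsReflection t) : titsSign cs t t = -1 := by
  obtain ⟨x, i, rfl⟩ := ht
  have hconj : x⁻¹ * (x * s i * x⁻¹) * x⁻¹⁻¹ = s i := by group
  have hx := titsSign_mul cs x x⁻¹ (x * s i * x⁻¹)
  rw [mul_inv_cancel, titsSign_one, hconj] at hx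
  rw [titsSign_mul, hconj, titsSign_mul, titsSign_simple, if_pos rfl, mul_inv_cancel_right,
    neg_one_mul, mul_neg, ← hx]

theorem titsSign_wordProd_inv_of_notMem {ω : List B} {t : W}
    (h : t ∉ cs.leftInvSeq ω) : titsSign cs (π ω)⁻¹ t = 1 := by
  induction ω generalizing t with
  | nil => simp [titsSign_one]
  | cons i ω ih =>
    simp only [leftInvSeq, List.mem_cons, List.mem_map, not_or, not_exists, not_and] at h
    rw [cs.wordProd_cons, mul_inv_rev, cs.inv_simple, titsSign_mul, titsSign_simple, if_neg h.1,
      one_mul, cs.inv_simple]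
    exact ih fun hmem => h.2 _ hmem (by simp [MulAut.conj_apply, cs.inv_simple, mul_assoc])

/- The sign over `t` is `1` for a reduced word of the shorter element `t * π ω`, and multiplying
by `t` flips it, so it is `-1` for `ω`. -/
theorem mem_leftInvSeq_of_isLeftInversion (ω : List B) {t : W}
    (h : cs.IsLeftInversion (π ω) t) : t ∈ cs.leftInvSeq ω := by
  obtain ⟨ht, hlt⟩ := h
  obtain ⟨ψ, hψ, hψω⟩ := cs.exists_isReduced (t * π ω)
  have hψsign : titsSign cs (π ψ)⁻¹ t = 1 := by
    refine titsSign_wordProd_inv_of_notMem cs fun hmem => ?_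
    have hgt := (cs.isLeftInversion_of_mem_leftInvSeq hψ hmem).2
    rw [← hψω, ← mul_assoc, ht.mul_self, one_mul] at hgt
    exact lt_asymm hlt hgt
  refine not_imp_comm.mp (titsSign_wordProd_inv_of_notMem cs) ?_
  have hω : (π ω)⁻¹ = (π ψ)⁻¹ * t := by
    rw [← hψω, mul_inv_rev, ht.inv, mul_assoc, ht.mul_self, mul_one]
  rw [hω, titsSign_mul, titsSign_reflection_self cs ht, mul_inv_cancel_right, hψsign]
  decide

theorem mem_rightInvSeq_of_isRightInversion (ω : List B) {t : W}
    (h : cs.IsRightInversion (π ω) t) : t ∈ cs.rightInvSeq ω := by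
  rw [← cs.isLeftInversion_inv_iff, ← wordProd_reverse] at h
  simpa [leftInvSeq_reverse] using mem_leftInvSeq_of_isLeftInversion cs ω.reverse h

theorem exists_sublist_of_isRightInversion {ω : List B} {t : W}
    (h : cs.IsRightInversion (π ω) t) :
    ∃ ω', ω' <+ ω ∧ ω'.length + 1 = ω.length ∧ π ω' = π ω * t := by
  obtain ⟨j, hj, rfl⟩ := List.getElem_of_mem (mem_rightInvSeq_of_isRightInversion cs ω h)
  rw [length_rightInvSeq] at hj
  refine ⟨ω.eraseIdx j, List.eraseIdx_sublist ω j, List.length_eraseIdx_add_one hj, ?_⟩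
  rw [← wordProd_mul_getD_rightInvSeq, List.getD_eq_getElem]

theorem isReduced_append_singleton_iff {ω : List B} {i : B} :
    cs.IsReduced (ω ++ [i]) ↔ cs.IsReduced ω ∧ ℓ (π ω * s i) = ℓ (π ω) + 1 := by
  have hle := cs.length_wordProd_le ω
  have hmul := cs.length_mul_simple (π ω) i
  simp only [CoxeterSystem.IsReduced, wordProd_append, wordProd_singleton, List.length_append,
    List.length_singleton]
  omega

theorem exists_isReduced_sublist (ω : List B) :
    ∃ ω', ω' <+ ω ∧ cs.IsReduced ω' ∧ π ω' = π ω := by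
  induction ω using List.reverseRecOn with
  | nil => exact ⟨[], List.Sublist.slnil, by simp [CoxeterSystem.IsReduced], rfl⟩
  | append_singleton ω i ih =>
    obtain ⟨ψ, hψω, hψ, hπ⟩ := ih
    rw [wordProd_append, wordProd_singleton, ← hπ]
    rcases cs.length_mul_simple (π ψ) i with hlen | hlen
    · exact ⟨ψ ++ [i], hψω.append_right [i],
        (isReduced_append_singleton_iff cs).mpr ⟨hψ, hlen⟩, by rw [wordProd_append, wordProd_singleton]⟩
    · obtain ⟨ψ', hψ'ψ, hlen', hπ'⟩ :=
        exists_sublist_of_isRightInversion cs (ω := ψ) ⟨cs.isReflection_simple i, by omega⟩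
      refine ⟨ψ', hψ'ψ.trans (hψω.trans (List.sublist_append_left ω [i])), ?_, hπ'⟩
      have := hψ.eq
      rw [CoxeterSystem.IsReduced, hπ']
      omega

def BruhatStep (x y : W) : Prop := ∃ t, cs.IsReflection t ∧ y = x * t ∧ ℓ x < ℓ y

def BruhatChainLE : W → W → Prop := Relation.ReflTransGen (BruhatStep cs)

theorem bruhatStep_mul_simple {w : W} {i : B} (h : ℓ w < ℓ (w * s i)) :
    BruhatStep cs w (w * s i) :=
  ⟨s i, cs.isReflection_simple i, rfl, h⟩

/- Counting lengths gives `ℓ (a * s i) = ℓ b = ℓ a + 1` and `ℓ (b * s i) < ℓ b`. Deleting a letter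
from a word for `b` ending in `i` yields `a`, and only deleting that last `i` keeps `a * s i` long
enough. -/
theorem mul_simple_eq_of_bruhatStep {a b : W} {i : B} (hab : BruhatStep cs a b)
    (h : ℓ (b * s i) ≤ ℓ (a * s i)) : a * s i = b := by
  obtain ⟨t, ht, rfl, hlt⟩ := hab
  have hne : ℓ (a * t * s i) ≠ ℓ (a * s i) := by
    have hconj : a * t * s i = a * s i * (s i * t * s i) := by simp [mul_assoc]
    rw [hconj]
    simpa [cs.inv_simple] using (ht.conj (s i)).length_mul_left_ne (a * s i)
  have hup := cs.length_mul_le a (s i)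
  rw [cs.length_simple] at hup
  have hdown : ℓ (a * t * s i) + 1 = ℓ (a * t) := by
    rcases cs.length_mul_simple (a * t) i with h' | h' <;> omega
  obtain ⟨ψ, hψ, hπψ⟩ := cs.exists_isReduced (a * t * s i)
  have hπ : π (ψ ++ [i]) = a * t := by
    rw [wordProd_append, wordProd_singleton, ← hπψ, cs.simple_mul_simple_cancel_right]
  obtain ⟨ω, hωψ, hlen, hπω⟩ := exists_sublist_of_isRightInversion cs (ω := ψ ++ [i])
    ⟨ht, by rwa [hπ, mul_assoc, ht.mul_self, mul_one]⟩
  rw [hπ, mul_assoc, ht.mul_self, mul_one] at hπω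
  obtain ⟨ω₁, ω₂, rfl, hω₁, hω₂⟩ := List.sublist_append_iff.mp hωψ
  have hψlen : ψ.length + 1 = ℓ (a * t) := by rw [← hψ.eq, ← hπψ, hdown]
  rcases List.sublist_singleton.mp hω₂ with rfl | rfl
  · simp only [List.append_nil, List.length_append, List.length_singleton] at hlen hπω
    have ha : a = a * t * s i := by rw [hπψ, ← hπω, hω₁.eq_of_length (by omega)]
    conv_lhs => rw [ha, cs.simple_mul_simple_cancel_right]
  · rw [wordProd_append, wordProd_singleton] at hπω
    have hshort := cs.length_wordProd_le ω₁
    rw [← cs.simple_mul_simple_cancel_right (w := π ω₁) i, hπω] at hshort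
    simp only [List.length_append, List.length_singleton] at hlen
    omega

theorem BruhatChainLE.mul_simple {y w : W} (h : BruhatChainLE cs y w) {i : B}
    (hw : ℓ w < ℓ (w * s i)) : BruhatChainLE cs (y * s i) (w * s i) := by
  induction h using Relation.ReflTransGen.head_induction_on with
  | refl => exact Relation.ReflTransGen.refl
  | @head a b hab hbw ih =>
    by_cases hlt : ℓ (a * s i) < ℓ (b * s i)
    · obtain ⟨t, ht, rfl, -⟩ := hab
      refine Relation.ReflTransGen.head ⟨s i * t * s i, ?_, ?_, hlt⟩ ih
      · simpa [cs.inv_simple] using ht.conj (s i)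
      · simp [mul_assoc]
    · rw [mul_simple_eq_of_bruhatStep cs hab (not_lt.mp hlt)]
      exact hbw.tail (bruhatStep_mul_simple cs hw)

theorem BruhatChainLE.exists_sublist {x w : W} (h : BruhatChainLE cs x w) {ω : List B}
    (hω : π ω = w) : ∃ n, n <+ ω ∧ π n = x := by
  induction h using Relation.ReflTransGen.head_induction_on with
  | refl => exact ⟨ω, List.Sublist.refl ω, hω⟩
  | @head a b hab _ ih =>
    obtain ⟨n, hnω, hπn⟩ := ih
    obtain ⟨t, ht, rfl, hlt⟩ := hab
    have hinv : cs.IsRightInversion (π n) t := by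
      rwa [IsRightInversion, hπn, mul_assoc, ht.mul_self, mul_one, and_iff_right ht]
    obtain ⟨ψ, hψn, -, hπψ⟩ := exists_sublist_of_isRightInversion cs hinv
    exact ⟨ψ, hψn.trans hnω, by rw [hπψ, hπn, mul_assoc, ht.mul_self, mul_one]⟩

theorem bruhatChainLE_of_sublist {ω l : List B} (hω : cs.IsReduced ω) (hl : l <+ ω) :
    BruhatChainLE cs (π l) (π ω) := by
  induction ω using List.reverseRecOn generalizing l with
  | nil => rw [List.sublist_nil.mp hl]; exact Relation.ReflTransGen.refl
  | append_singleton ω i ih =>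
    obtain ⟨hω, hlen⟩ := (isReduced_append_singleton_iff cs).mp hω
    obtain ⟨l₁, l₂, rfl, hl₁, hl₂⟩ := List.sublist_append_iff.mp hl
    rw [wordProd_append, wordProd_append, wordProd_singleton]
    rcases List.sublist_singleton.mp hl₂ with rfl | rfl
    · rw [wordProd_nil, mul_one]
      exact (ih hω hl₁).tail (bruhatStep_mul_simple cs (by omega))
    · rw [wordProd_singleton]
      exact (ih hω hl₁).mul_simple cs (by omega)

theorem bruhatLE_iff_bruhatChainLE {x w : W} : bruhatLE cs x w ↔ BruhatChainLE cs x w := by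
  constructor
  · rintro ⟨ω, hω, rfl, l, hl, rfl⟩
    exact bruhatChainLE_of_sublist cs hω hl
  · intro h
    obtain ⟨ω, hω, rfl⟩ := cs.exists_isReduced w
    obtain ⟨l, hl, rfl⟩ := h.exists_sublist cs rfl
    exact ⟨ω, hω, rfl, l, hl, rfl⟩

theorem bruhatLE_trans {x y z : W} (hxy : bruhatLE cs x y) (hyz : bruhatLE cs y z) :
    bruhatLE cs x z := by
  rw [bruhatLE_iff_bruhatChainLE] at hxy hyz ⊢
  exact hxy.trans hyz

theorem bruhatLE_of_sublist {ω l : List B} (hω : cs.IsReduced ω) (hl : l <+ ω) :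
    bruhatLE cs (π l) (π ω) :=
  ⟨ω, hω, rfl, l, hl, rfl⟩

theorem bruhatLE.exists_sublist {x w : W} (h : bruhatLE cs x w) {ω : List B} (hω : π ω = w) :
    ∃ n, n <+ ω ∧ π n = x :=
  ((bruhatLE_iff_bruhatChainLE cs).mp h).exists_sublist cs hω

section Parabolic

variable {J : Set B}

theorem simple_mem_WJ {i : B} (hi : i ∈ J) : s i ∈ WJ cs J :=
  Subgroup.subset_closure ⟨i, hi, rfl⟩

theorem wordProd_mem_WJ {ω : List B} (hω : ∀ i ∈ ω, i ∈ J) : π ω ∈ WJ cs J := by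
  induction ω with
  | nil => exact one_mem _
  | cons i ω ih =>
    rw [List.forall_mem_cons] at hω
    rw [wordProd_cons]
    exact mul_mem (simple_mem_WJ cs hω.1) (ih hω.2)

theorem exists_isReduced_of_mem_WJ {v : W} (hv : v ∈ WJ cs J) :
    ∃ ω : List B, (∀ i ∈ ω, i ∈ J) ∧ cs.IsReduced ω ∧ π ω = v := by
  obtain ⟨ω, hωJ, rfl⟩ : ∃ ω : List B, (∀ i ∈ ω, i ∈ J) ∧ π ω = v := by
    induction hv using Subgroup.closure_induction with
    | mem _ hx =>
      obtain ⟨i, hi, rfl⟩ := hx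
      exact ⟨[i], by simpa using hi, wordProd_singleton cs i⟩
    | one => exact ⟨[], by simp, wordProd_nil cs⟩
    | mul _ _ _ _ hx hy =>
      obtain ⟨ω₁, h₁, rfl⟩ := hx
      obtain ⟨ω₂, h₂, rfl⟩ := hy
      exact ⟨ω₁ ++ ω₂, List.forall_mem_append.mpr ⟨h₁, h₂⟩, wordProd_append cs ω₁ ω₂⟩
    | inv _ _ hx =>
      obtain ⟨ω, h, rfl⟩ := hx
      exact ⟨ω.reverse, by simpa using h, wordProd_reverse cs ω⟩
  obtain ⟨ω', hω'ω, hω', hπ⟩ := exists_isReduced_sublist cs ω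
  exact ⟨ω', fun i hi => hωJ i (hω'ω.subset hi), hω', hπ⟩

/- A reduced subword of `α ++ β` for `u * c` keeps all of `α`, because the part it keeps of `α`
lies in the coset `u W_J`. -/
theorem length_mul_of_forall_length_le {u c : W} (hmin : ∀ c ∈ WJ cs J, ℓ u ≤ ℓ (u * c))
    (hc : c ∈ WJ cs J) : ℓ (u * c) = ℓ u + ℓ c := by
  obtain ⟨α, hα, rfl⟩ := cs.exists_isReduced u
  obtain ⟨β, hβJ, hβ, rfl⟩ := exists_isReduced_of_mem_WJ cs hc
  obtain ⟨n, hn, hnred, hπn⟩ := exists_isReduced_sublist cs (α ++ β)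
  obtain ⟨n₁, n₂, rfl, hn₁, hn₂⟩ := List.sublist_append_iff.mp hn
  have hn₂J : π n₂ ∈ WJ cs J := wordProd_mem_WJ cs fun i hi => hβJ i (hn₂.subset hi)
  rw [wordProd_append, wordProd_append] at hπn
  have hn₁α : n₁ = α := by
    have hcoset : π α * (π β * (π n₂)⁻¹) = π n₁ := by
      rw [← mul_assoc, ← hπn, mul_inv_cancel_right]
    have := hmin _ (mul_mem hc (inv_mem hn₂J))
    rw [hcoset] at this
    exact hn₁.eq_of_length_le (by linarith [hα.eq, cs.length_wordProd_le n₁])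
  subst hn₁α
  have hn₂β : π n₂ = π β := mul_left_cancel hπn
  refine le_antisymm (cs.length_mul_le _ _) ?_
  calc ℓ (π n₁) + ℓ (π β) = n₁.length + ℓ (π n₂) := by rw [hα.eq, hn₂β]
    _ ≤ n₁.length + n₂.length := Nat.add_le_add_left (cs.length_wordProd_le n₂) _
    _ = ℓ (π n₁ * π β) := by rw [← hn₂β, ← wordProd_append, hnred.eq, List.length_append]

/- Take `u₀` of minimal length in `u W_J`. If `u ≠ u₀`, the last letter of a reduced word for
`u₀⁻¹ * u` would be a descent of `u` in `J`. -/
theorem IsMinRep.length_le_mul {u c : W} (hu : IsMinRep cs J u) (hc : c ∈ WJ cs J) :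
    ℓ u ≤ ℓ (u * c) := by
  obtain ⟨u₀, hu₀, hmin⟩ :=
    (measure cs.length).wf.has_min {v | v⁻¹ * u ∈ WJ cs J} ⟨u, by simp [one_mem]⟩
  have hmin' : ∀ c ∈ WJ cs J, ℓ u₀ ≤ ℓ (u₀ * c) := fun c hc =>
    not_lt.mp <| hmin _ <| by simpa [mul_assoc] using mul_mem (inv_mem hc) hu₀
  suffices u₀ = u by subst this; exact hmin' c hc
  obtain ⟨β, hβJ, hβ, hπβ⟩ := exists_isReduced_of_mem_WJ cs hu₀
  rcases List.eq_nil_or_concat β with rfl | ⟨β, j, rfl⟩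
  · rw [wordProd_nil] at hπβ
    exact inv_mul_eq_one.mp hπβ.symm
  rw [List.concat_eq_append] at hβJ hβ hπβ
  rw [List.forall_mem_append, List.forall_mem_singleton] at hβJ
  obtain ⟨hβ, hlen⟩ := (isReduced_append_singleton_iff cs).mp hβ
  have hu_eq : u = u₀ * π β * s j := by
    rw [mul_assoc, ← wordProd_singleton, ← wordProd_append, hπβ, mul_inv_cancel_left]
  have hlu := length_mul_of_forall_length_le cs hmin'
    (mul_mem (wordProd_mem_WJ cs hβJ.1) (simple_mem_WJ cs hβJ.2))
  have hlus := length_mul_of_forall_length_le cs hmin' (wordProd_mem_WJ cs hβJ.1)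
  have hdesc := hu j hβJ.2
  rw [hu_eq, cs.simple_mul_simple_cancel_right, hlus, mul_assoc, hlu, hlen] at hdesc
  omega

theorem IsMinRep.length_mul {u c : W} (hu : IsMinRep cs J u) (hc : c ∈ WJ cs J) :
    ℓ (u * c) = ℓ u + ℓ c :=
  length_mul_of_forall_length_le cs (fun _ hc => hu.length_le_mul cs hc) hc

theorem IsMinRep.isReduced_append {u : W} (hu : IsMinRep cs J u) {α β : List B}
    (hα : cs.IsReduced α) (hπα : π α = u) (hβJ : ∀ i ∈ β, i ∈ J) (hβ : cs.IsReduced β) :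
    cs.IsReduced (α ++ β) := by
  rw [CoxeterSystem.IsReduced, wordProd_append, hπα, hu.length_mul cs (wordProd_mem_WJ cs hβJ),
    ← hπα, hα.eq, hβ.eq, List.length_append]

theorem IsMinRep.bruhatLE_of_inv_mul_mem {u x : W} (hu : IsMinRep cs J u)
    (hux : u⁻¹ * x ∈ WJ cs J) : bruhatLE cs u x := by
  obtain ⟨α, hα, rfl⟩ := cs.exists_isReduced u
  obtain ⟨β, hβJ, hβ, hπβ⟩ := exists_isReduced_of_mem_WJ cs hux
  have hx : π (α ++ β) = x := by rw [wordProd_append, hπβ, mul_inv_cancel_left]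
  rw [← hx]
  exact bruhatLE_of_sublist cs (hu.isReduced_append cs hα rfl hβJ hβ)
    (List.sublist_append_left α β)

theorem IsMinRep.bruhatLE_of_bruhatLE {u v x w : W} (hu : IsMinRep cs J u)
    (hux : u⁻¹ * x ∈ WJ cs J) (hv : IsMinRep cs J v) (hvw : v⁻¹ * w ∈ WJ cs J)
    (hxw : bruhatLE cs x w) : bruhatLE cs u v := by
  obtain ⟨α, hα, rfl⟩ := cs.exists_isReduced v
  obtain ⟨β, hβJ, hβ, hπβ⟩ := exists_isReduced_of_mem_WJ cs hvw
  have hw : π (α ++ β) = w := by rw [wordProd_append, hπβ, mul_inv_cancel_left]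
  obtain ⟨n, hn, rfl⟩ := hxw.exists_sublist cs hw
  obtain ⟨n₁, n₂, rfl, hn₁, hn₂⟩ := List.sublist_append_iff.mp hn
  have hn₂J : π n₂ ∈ WJ cs J := wordProd_mem_WJ cs fun i hi => hβJ i (hn₂.subset hi)
  have hun₁ : u⁻¹ * π n₁ ∈ WJ cs J := by
    simpa [wordProd_append, mul_assoc] using mul_mem hux (inv_mem hn₂J)
  exact bruhatLE_trans cs (hu.bruhatLE_of_inv_mul_mem cs hun₁) (bruhatLE_of_sublist cs hα hn₁)

end Parabolic

theorem map_eq_zero_of_forall_repr_ne_zero {ι A M N : Type*} [Semiring A] [AddCommMonoid M]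
    [Module A M] [AddCommMonoid N] [Module A N] (b : Module.Basis ι A M) (f : M →ₗ[A] N)
    (m : M) (h : ∀ i, b.repr m i ≠ 0 → f (b i) = 0) : f m = 0 := by
  rw [← b.linearCombination_repr m, Finsupp.linearCombination_apply, map_finsuppSum]
  refine Finset.sum_eq_zero fun i hi => ?_
  simp only [map_smul]
  rw [h i (Finsupp.mem_support_iff.mp hi), smul_zero]

section Hecke

variable {Tb : Module.Basis W R H}

theorem IsHeckeBasis.mul_simple_mem_span (hT : IsHeckeBasis cs Tb) (v : W) (i : B) :
    Tb v * Tb (s i) ∈ Submodule.span R {Tb (v * s i), Tb v} := by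
  rcases cs.length_mul_simple v i with hlen | hlen
  · rw [hT.T_mul v (s i) (by rw [cs.length_simple, hlen])]
    exact Submodule.subset_span (by simp)
  · rw [hT.mul_simple v i (by omega)]
    exact add_mem (Submodule.subset_span (by simp))
      (Submodule.smul_mem _ _ (Submodule.subset_span (by simp)))

theorem IsHeckeBasis.mul_wordProd_mem_span (hT : IsHeckeBasis cs Tb) (a : W) {m : List B}
    (hm : cs.IsReduced m) :
    Tb a * Tb (π m) ∈ Submodule.span R ((fun n => Tb (a * π n)) '' {n | n <+ m}) := by
  induction m using List.reverseRecOn with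
  | nil =>
    rw [wordProd_nil, hT.T_one, mul_one]
    exact Submodule.subset_span ⟨[], List.Sublist.slnil, by simp⟩
  | append_singleton m i ih =>
    obtain ⟨hm, hlen⟩ := (isReduced_append_singleton_iff cs).mp hm
    have hmul :
        Tb a * Tb (π (m ++ [i])) = LinearMap.mulRight R (Tb (s i)) (Tb a * Tb (π m)) := by
      rw [LinearMap.mulRight_apply, mul_assoc, wordProd_append, wordProd_singleton,
        hT.T_mul (π m) (s i) (by rw [cs.length_simple, hlen])]
    rw [hmul]
    refine (Submodule.map_span_le _ _ _).mpr ?_ (Submodule.mem_map_of_mem (ih hm))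
    rintro _ ⟨n, hn, rfl⟩
    refine Submodule.span_le.mpr ?_ (hT.mul_simple_mem_span cs (a * π n) i)
    rintro _ (rfl | rfl)
    · exact Submodule.subset_span ⟨n ++ [i], hn.append_right [i], by
        simp only [wordProd_append, wordProd_singleton, mul_assoc]⟩
    · exact Submodule.subset_span ⟨n, hn.trans (List.sublist_append_left m [i]), rfl⟩

theorem resMap_basis (J : Set B) (v : W) :
    resMap cs Tb J (Tb v) = if v ∈ WJ cs J then Tb v else 0 :=
  Tb.constr_basis R _ v

theorem resMap_mul_eq_zero_of_bruhatLE (hT : IsHeckeBasis cs Tb) {J : Set B} {u v w x : W}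
    (hu : IsMinRep cs J u) (hv : IsMinRep cs J v) (hvw : v⁻¹ * w ∈ WJ cs J)
    (huv : ¬ bruhatLE cs u v) (hxw : bruhatLE cs x w) :
    resMap cs Tb J (Tb u⁻¹ * Tb x) = 0 := by
  obtain ⟨m, hm, rfl⟩ := cs.exists_isReduced x
  suffices Submodule.span R ((fun n => Tb (u⁻¹ * π n)) '' {n | n <+ m}) ≤
      LinearMap.ker (resMap cs Tb J) from this (hT.mul_wordProd_mem_span cs u⁻¹ hm)
  rw [Submodule.span_le]
  rintro _ ⟨n, hn, rfl⟩
  rw [SetLike.mem_coe, LinearMap.mem_ker, resMap_basis, if_neg]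
  exact fun hun => huv (hu.bruhatLE_of_bruhatLE cs hun hv hvw
    (bruhatLE_trans cs (bruhatLE_of_sublist cs hm hn) hxw))

end Hecke

/-- if u ∈ W^J and w = w^J · w_J with u ≰ w^J in Bruhat order,
then (T_{u⁻¹} C_w)|_J = 0. -/
theorem resMap_TC_vanish (cs : CoxeterSystem M W) (Tb : Module.Basis W R H)
    (hT : IsHeckeBasis cs Tb) (C : W → H) (hC : IsKLBasis cs Tb C)
    (J : Set B) (u wJup wJ w : W)
    (hu : IsMinRep cs J u) (hwJup : IsMinRep cs J wJup) (hwJ : wJ ∈ WJ cs J)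
    (hw : w = wJup * wJ) (hnle : ¬ bruhatLE cs u wJup) :
    resMap cs Tb J (Tb u⁻¹ * C w) = 0 := by
  have hwJupw : wJup⁻¹ * w ∈ WJ cs J := by rwa [hw, inv_mul_cancel_left]
  refine map_eq_zero_of_forall_repr_ne_zero Tb
    ((resMap cs Tb J).comp (LinearMap.mulLeft R (Tb u⁻¹))) (C w) fun x hx => ?_
  have hxw : bruhatLE cs x w := by
    by_contra hxw
    exact hx (hC.repr_eq_zero x w hxw)
  exact resMap_mul_eq_zero_of_bruhatLE cs hT hu hwJup hwJupw hnle hxw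

end HeckeRes
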